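/- arXiv:2007.09018 — 3 statements merged into one kernel-verified Lean document; each statement's English description precedes it below -/
import Mathlib

section
/- Let G be a connected finite undirected multigraph with s, t ∈ V(G), s ≠ t, and let W_0, …, W_{q+1} be the bundles of G. Then for every i ∈ {0,…,q}, the induced subgraph G[W_i ∪ W_{i+1}] is connected. -/
/-!
A finite undirected multigraph (parallel edges allowed, no loops) is modelled by a
vertex type `V`, an edge type `E` (both finite) and an endpoint map `ends : E → Sym2 V`
such that no edge is a loop (`¬ (ends e).IsDiag`).
-/

namespace FlowAug

variable {V E : Type}

/-- Two vertices are adjacent in `G - X` if some edge outside `X` joins them. -/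
def Adj (ends : E → Sym2 V) (X : Set E) (u v : V) : Prop :=
  ∃ e, e ∉ X ∧ ends e = s(u, v)

/-- Reachability in `G - X`. -/
def Reach (ends : E → Sym2 V) (X : Set E) : V → V → Prop :=
  Relation.ReflTransGen (Adj ends X)

/-- `R_S(X)` : the set of vertices reachable from the vertex set `S` in `G - X`. -/
def RS (ends : E → Sym2 V) (X : Set E) (S : Set V) : Set V :=
  {v | ∃ u ∈ S, Reach ends X u v}

/-- `δ(S)` : the set of edges with exactly one endpoint in `S`. -/
def edgeBoundary (ends : E → Sym2 V) (S : Set V) : Set E :=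
  {e | ∃ u v, ends e = s(u, v) ∧ u ∈ S ∧ v ∉ S}

/-- `X` is an `(S,T)`-cut. -/
def IsCut (ends : E → Sym2 V) (X : Set E) (S T : Set V) : Prop :=
  RS ends X S ∩ RS ends X T = ∅

/-- `X` is a minimal `(S,T)`-cut: no proper subset of `X` is an `(S,T)`-cut. -/
def IsMinimalCut (ends : E → Sym2 V) (X : Set E) (S T : Set V) : Prop :=
  IsCut ends X S T ∧ ∀ Y : Set E, Y ⊂ X → ¬ IsCut ends Y S T

/-- `X` is an `(S,T)`-cut of minimum cardinality. -/
def IsMinimumCut (ends : E → Sym2 V) (X : Set E) (S T : Set V) : Prop :=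
  IsCut ends X S T ∧ ∀ Y : Set E, IsCut ends Y S T → X.ncard ≤ Y.ncard

/-- `X` is an `(S,T)`-cut that is closest to `S`: every `(S,T)`-cut `X' ≠ X` with
`R_S(X') ⊆ R_S(X)` satisfies `|X'| > |X|`. -/
def IsClosestCut (ends : E → Sym2 V) (X : Set E) (S T : Set V) : Prop :=
  IsCut ends X S T ∧
    ∀ X' : Set E, IsCut ends X' S T → X' ≠ X →
      RS ends X' S ⊆ RS ends X S → X.ncard < X'.ncard

/-- `λ_G(s,t)` : the minimum cardinality of an `(s,t)`-cut (equivalently, by Menger's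
theorem, the maximum number of pairwise edge-disjoint `(s,t)`-paths). -/
noncomputable def lamCut (ends : E → Sym2 V) (s t : V) : ℕ :=
  sInf {n | ∃ X : Set E, IsCut ends X {s} {t} ∧ X.ncard = n}

/-- `Z_{s,t}` : the edges of `Z` with one endpoint in `R_s(Z)` and one in `R_t(Z)`. -/
def Zst (ends : E → Sym2 V) (s t : V) (Z : Set E) : Set E :=
  {e | e ∈ Z ∧ ∃ u v, ends e = s(u, v) ∧ u ∈ RS ends Z {s} ∧ v ∈ RS ends Z {t}}

/-- `Z` is a special `(s,t)`-cut: `Z` is an `(s,t)`-cut and `Z_{s,t}` is an `(s,t)`-cut. -/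
def IsSpecial (ends : E → Sym2 V) (s t : V) (Z : Set E) : Prop :=
  IsCut ends Z {s} {t} ∧ IsCut ends (Zst ends s t Z) {s} {t}

/-- `Z` is eligible for `(s,t)`: special, and every edge of `Z` has its endpoints in
different connected components of `G - Z`. -/
def IsEligible (ends : E → Sym2 V) (s t : V) (Z : Set E) : Prop :=
  IsSpecial ends s t Z ∧ ∀ e ∈ Z, ∀ u v : V, ends e = s(u, v) → ¬ Reach ends Z u v

/-- `Z` is a star `(s,t)`-cut: an `(s,t)`-cut each of whose edges has exactly one
endpoint in `R_s(Z)`. -/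
def IsStarCut (ends : E → Sym2 V) (s t : V) (Z : Set E) : Prop :=
  IsCut ends Z {s} {t} ∧
    ∀ e ∈ Z, ∃ u v : V, ends e = s(u, v) ∧ u ∈ RS ends Z {s} ∧ v ∉ RS ends Z {s}

/-- A path from `s` to `t` in the multigraph described by `ends`, given by its
sequence of vertices and traversed edges. -/
structure MGPath (V E : Type) (ends : E → Sym2 V) (s t : V) where
  n : ℕ
  vert : Fin (n + 1) → V
  edge : Fin n → E
  vert_zero : vert 0 = s
  vert_last : vert (Fin.last n) = t
  ends_eq : ∀ i : Fin n, ends (edge i) = s(vert i.castSucc, vert i.succ)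

/-- A family of paths is (pairwise) edge-disjoint: no edge is used twice, neither on
a single path nor on two different paths. -/
def EdgeDisjoint {ends : E → Sym2 V} {s t : V} {k : ℕ}
    (P : Fin k → MGPath V E ends s t) : Prop :=
  Function.Injective fun p : (Σ i : Fin k, Fin (P i).n) => (P p.1).edge p.2

/-- `P` is a witnessing `(s,t)`-flow for `Z`: a family of `λ_G(s,t)` pairwise
edge-disjoint `(s,t)`-paths such that every edge of `Z_{s,t}` occurs on a path of `P`
and every path of `P` contains exactly one edge of `Z`. -/
def IsWitnessingFlow (ends : E → Sym2 V) (s t : V) (Z : Set E) {k : ℕ}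
    (P : Fin k → MGPath V E ends s t) : Prop :=
  k = lamCut ends s t ∧ EdgeDisjoint P ∧
    (∀ e ∈ Zst ends s t Z, ∃ (i : Fin k) (j : Fin (P i).n), (P i).edge j = e) ∧
    ∀ i : Fin k, ∃! j : Fin (P i).n, (P i).edge j ∈ Z

/-- The vertices occurring on the paths of a family `P`. -/
def pathVerts {ends : E → Sym2 V} {s t : V} {k : ℕ}
    (P : Fin k → MGPath V E ends s t) : Set V :=
  {v | ∃ (i : Fin k) (m : Fin ((P i).n + 1)), (P i).vert m = v}

/-- The edges occurring on the paths of a family `P`. -/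
def pathEdges {ends : E → Sym2 V} {s t : V} {k : ℕ}
    (P : Fin k → MGPath V E ends s t) : Set E :=
  {e | ∃ (i : Fin k) (j : Fin (P i).n), (P i).edge j = e}

/-- The arcs obtained by orienting every edge of every path of `P` in the forward
direction (from `s` towards `t`). -/
def DirAdjOnFlow {ends : E → Sym2 V} {s t : V} {k : ℕ}
    (P : Fin k → MGPath V E ends s t) (u v : V) : Prop :=
  ∃ (i : Fin k) (l : Fin (P i).n), (P i).vert l.castSucc = u ∧ (P i).vert l.succ = v

/-- `N[S]` : the closed neighborhood of `S`. -/
def closedNbhd (ends : E → Sym2 V) (S : Set V) : Set V :=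
  S ∪ {v | ∃ u ∈ S, ∃ e : E, ends e = s(u, v)}

/-- `X` is the minimum `(s,t)`-cut closest to `s` among all minimum `(s,t)`-cuts
satisfying the property `P`. -/
def IsClosestMinCutAmong (ends : E → Sym2 V) (s t : V) (P : Set E → Prop)
    (X : Set E) : Prop :=
  IsMinimumCut ends X {s} {t} ∧ P X ∧
    ∀ Y : Set E, IsMinimumCut ends Y {s} {t} → P Y → Y ≠ X →
      RS ends Y {s} ⊆ RS ends X {s} → X.ncard < Y.ncard

/-- `C 0, …, C p` is the canonical sequence of non-crossing minimum `(s,t)`-cuts: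
`C 0` is the unique minimum `(s,t)`-cut closest to `s`; `C i` is the unique minimum
`(s,t)`-cut closest to `s` among all minimum `(s,t)`-cuts `X` with
`N[R_s(C (i-1))] ⊆ R_s(X)`; and `p` is the largest index for which such a cut exists. -/
def CanonSeq (ends : E → Sym2 V) (s t : V) (p : ℕ) (C : ℕ → Set E) : Prop :=
  IsClosestMinCutAmong ends s t (fun _ => True) (C 0) ∧
    (∀ i : ℕ, 0 < i → i ≤ p →
      IsClosestMinCutAmong ends s t
        (fun X => closedNbhd ends (RS ends (C (i - 1)) {s}) ⊆ RS ends X {s}) (C i)) ∧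
    ¬ ∃ X : Set E, IsMinimumCut ends X {s} {t} ∧
        closedNbhd ends (RS ends (C p) {s}) ⊆ RS ends X {s}

/-- The blocks `V_0, …, V_{p+1}` associated with the canonical sequence of cuts. -/
def blockOf (ends : E → Sym2 V) (s : V) (p : ℕ) (C : ℕ → Set E) (i : ℕ) : Set V :=
  if i = 0 then RS ends (C 0) {s}
  else if i ≤ p then RS ends (C i) {s} \ RS ends (C (i - 1)) {s}
  else Set.univ \ RS ends (C p) {s}

/-- Adjacency inside the induced subgraph `G[B]`. -/
def AdjIn (ends : E → Sym2 V) (B : Set V) (u v : V) : Prop :=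
  u ∈ B ∧ v ∈ B ∧ ∃ e : E, ends e = s(u, v)

/-- Reachability inside the induced subgraph `G[B]`. -/
def ReachIn (ends : E → Sym2 V) (B : Set V) : V → V → Prop :=
  Relation.ReflTransGen (AdjIn ends B)

/-- The induced subgraph `G[B]` is connected. -/
def ConnIn (ends : E → Sym2 V) (B : Set V) : Prop :=
  ∀ u ∈ B, ∀ v ∈ B, ReachIn ends B u v

/-- The connected component of `u` in the induced subgraph `G[B]`. -/
def compIn (ends : E → Sym2 V) (B : Set V) (u : V) : Set V :=
  {v | v ∈ B ∧ ReachIn ends B u v}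

/-- The set of connected components of the induced subgraph `G[B]`. -/
def componentsIn (ends : E → Sym2 V) (B : Set V) : Set (Set V) :=
  {K | ∃ u ∈ B, K = compIn ends B u}

/-- The union of the blocks `V_a, …, V_b`. -/
def unionBlocks (ends : E → Sym2 V) (s : V) (p : ℕ) (C : ℕ → Set E)
    (a b : ℕ) : Set V :=
  ⋃ j ∈ Set.Icc a b, blockOf ends s p C j

/-- `st` encodes the decomposition of the blocks `V_0, …, V_{p+1}` into bundles
`W_0, …, W_{q+1}`: bundle `W_i` consists of the blocks `V_{st i}, …, V_{st (i+1) - 1}`.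
`W_0 = V_0`, and each further bundle is greedily either a single connected block, or a
maximal union of contiguous blocks inducing a disconnected subgraph. -/
def IsBundleSeq (ends : E → Sym2 V) (s : V) (p : ℕ) (C : ℕ → Set E)
    (q : ℕ) (st : ℕ → ℕ) : Prop :=
  st 0 = 0 ∧ st 1 = 1 ∧ st (q + 2) = p + 2 ∧
    (∀ i j : ℕ, i < j → j ≤ q + 2 → st i < st j) ∧
    ∀ i : ℕ, 1 ≤ i → i ≤ q + 1 →
      (st (i + 1) = st i + 1 ∧ ConnIn ends (blockOf ends s p C (st i))) ∨
      (¬ ConnIn ends (blockOf ends s p C (st i)) ∧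
        ¬ ConnIn ends (unionBlocks ends s p C (st i) (st (i + 1) - 1)) ∧
        ∀ j : ℕ, st (i + 1) - 1 < j → j ≤ p + 1 →
          ConnIn ends (unionBlocks ends s p C (st i) j))

/-- The bundle `W_i`. -/
def bundleOf (ends : E → Sym2 V) (s : V) (p : ℕ) (C : ℕ → Set E) (st : ℕ → ℕ)
    (i : ℕ) : Set V :=
  unionBlocks ends s p C (st i) (st (i + 1) - 1)

/-- `C'_i` : the cut (among `C_0, …, C_p`) separating bundle `W_i` from `W_{i+1}`. -/
def interCut (C : ℕ → Set E) (st : ℕ → ℕ) (i : ℕ) : Set E :=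
  C (st (i + 1) - 1)

/-- A bundle `W` is unaffected by `Z` if `N[W]` is contained in a single connected
component of `G - Z`. -/
def Unaffected (ends : E → Sym2 V) (Z : Set E) (W : Set V) : Prop :=
  ∀ u ∈ closedNbhd ends W, ∀ v ∈ closedNbhd ends W, Reach ends Z u v

/-- The stretch `W_{a,b} = W_a ∪ ⋯ ∪ W_b` of bundles. -/
def stretchSet (ends : E → Sym2 V) (s : V) (p : ℕ) (C : ℕ → Set E) (st : ℕ → ℕ)
    (a b : ℕ) : Set V :=
  ⋃ i ∈ Set.Icc a b, bundleOf ends s p C st i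

/-- The left interface of a stretch starting at bundle `W_a`. -/
def leftInterface (ends : E → Sym2 V) (s : V) (p : ℕ) (C : ℕ → Set E) (st : ℕ → ℕ)
    (a : ℕ) : Set V :=
  if a = 0 then {s}
  else {v | v ∈ bundleOf ends s p C st a ∧ ∃ e ∈ interCut C st (a - 1), v ∈ ends e}

/-- The right interface of a stretch ending at bundle `W_b`. -/
def rightInterface (ends : E → Sym2 V) (s t : V) (p : ℕ) (C : ℕ → Set E)
    (st : ℕ → ℕ) (q b : ℕ) : Set V :=
  if b = q + 1 then {t}
  else {v | v ∈ bundleOf ends s p C st b ∧ ∃ e ∈ interCut C st b, v ∈ ends e}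

/-- `W_{a,b}` is a maximal stretch of bundles all affected by `Z`. -/
def MaxAffStretch (ends : E → Sym2 V) (s : V) (p : ℕ) (C : ℕ → Set E)
    (st : ℕ → ℕ) (q : ℕ) (Z : Set E) (a b : ℕ) : Prop :=
  a ≤ b ∧ b ≤ q + 1 ∧
    (∀ i : ℕ, a ≤ i → i ≤ b → ¬ Unaffected ends Z (bundleOf ends s p C st i)) ∧
    (a = 0 ∨ Unaffected ends Z (bundleOf ends s p C st (a - 1))) ∧
    (b = q + 1 ∨ Unaffected ends Z (bundleOf ends s p C st (b + 1)))

/-- `W_{a,b}` is a maximal stretch of bundles affected by `Z` containing both a vertex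
reachable from `s` and a vertex reachable from `t` in `G - Z`. -/
def StronglyAffStretch (ends : E → Sym2 V) (s t : V) (p : ℕ) (C : ℕ → Set E)
    (st : ℕ → ℕ) (q : ℕ) (Z : Set E) (a b : ℕ) : Prop :=
  MaxAffStretch ends s p C st q Z a b ∧
    (stretchSet ends s p C st a b ∩ RS ends Z {s}).Nonempty ∧
    (stretchSet ends s p C st a b ∩ RS ends Z {t}).Nonempty

/-- Adjacency inside the induced subgraph `G[B]` avoiding the edge set `X`. -/
def AdjInX (ends : E → Sym2 V) (B : Set V) (X : Set E) (u v : V) : Prop :=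
  u ∈ B ∧ v ∈ B ∧ ∃ e, e ∉ X ∧ ends e = s(u, v)

/-- Reachability inside `G[B] - X`. -/
def ReachInX (ends : E → Sym2 V) (B : Set V) (X : Set E) : V → V → Prop :=
  Relation.ReflTransGen (AdjInX ends B X)

/-- `X` is a star `(a,b)`-cut of the induced subgraph `H = G[B]`: in `H - X` no path
connects `a` and `b`, and every edge of `X` has exactly one endpoint reachable from
`a` in `H - X`. -/
def IsStarCutIn (ends : E → Sym2 V) (B : Set V) (a b : V) (X : Set E) : Prop :=
  ¬ ReachInX ends B X a b ∧
    ∀ e ∈ X, ∃ u v : V, ends e = s(u, v) ∧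
      ReachInX ends B X a u ∧ ¬ ReachInX ends B X a v

end FlowAug

namespace FlowAug

/-!
Write `P_m = V_0 ∪ ⋯ ∪ V_{m-1}`. Each `P_m` is `R_s(C_{m-1})` or all of `V`, so it induces a
connected subgraph containing `s`, and the canonical sequence guarantees `N[P_m] ⊆ P_{m+1}`.
If `W_i` is a disconnected bundle, `W_i ∪ W_{i+1}` is connected by the maximality built into the
definition of bundles. Otherwise `W_i = V_a` is a connected block and `W_i ∪ W_{i+1} = P_k ∖ P_a`.
A path in `G[P_k]` from `s` to a vertex `w ∉ P_{a+1}` leaves `P_{a+1}` for the last time along an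
edge `uv`; since `v ∉ N[P_a]`, the vertex `u` lies in `V_a`, and `w` is joined to `u` inside
`P_k ∖ P_a`.
-/

section InducedReachability

variable {V E : Type} {ends : E → Sym2 V}

instance (B : Set V) : Std.Symm (AdjIn ends B) where
  symm _ _ := fun ⟨hu, hv, e, he⟩ => ⟨hv, hu, e, he.trans Sym2.eq_swap⟩

theorem ReachIn.symm {B : Set V} {u v : V} (h : ReachIn ends B u v) : ReachIn ends B v u :=
  Std.Symm.symm (r := Relation.ReflTransGen (AdjIn ends B)) _ _ h

theorem ReachIn.mono {B B' : Set V} (hB : B ⊆ B') {u v : V} (h : ReachIn ends B u v) :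
    ReachIn ends B' u v :=
  Relation.ReflTransGen.mono (fun _ _ ⟨hu, hv, he⟩ => ⟨hB hu, hB hv, he⟩) _ _ h

theorem reachIn_RS_of_reach {X : Set E} {s w : V} (h : Reach ends X s w) :
    ReachIn ends (RS ends X {s}) s w := by
  induction h with
  | refl => exact .refl
  | @tail y z hy hyz ih =>
    exact ih.tail ⟨⟨s, rfl, hy⟩, ⟨s, rfl, hy.tail hyz⟩, hyz.imp fun _ => And.right⟩

theorem connIn_of_forall_reachIn {D B : Set V} (hD : ConnIn ends D) (hDB : D ⊆ B)
    (h : ∀ w ∈ B, ∃ u ∈ D, ReachIn ends B w u) : ConnIn ends B := by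
  intro w hw x hx
  obtain ⟨u, hu, hwu⟩ := h w hw
  obtain ⟨v, hv, hxv⟩ := h x hx
  exact (hwu.trans ((hD u hu v hv).mono hDB)).trans hxv.symm

theorem connIn_RS (X : Set E) (s : V) : ConnIn ends (RS ends X {s}) := by
  refine connIn_of_forall_reachIn (D := {s}) ?_ ?_ ?_
  · rintro u rfl v rfl
    exact .refl
  · exact Set.singleton_subset_iff.2 ⟨s, rfl, .refl⟩
  · rintro w ⟨u, hu, hw⟩
    exact ⟨s, rfl, (reachIn_RS_of_reach (hu ▸ hw)).symm⟩

theorem ReachIn.exists_exit {K A : Set V} {a b : V} (h : ReachIn ends K a b) (ha : a ∈ A)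
    (hb : b ∉ A) : ∃ u v, u ∈ A ∧ v ∉ A ∧ AdjIn ends K u v ∧ ReachIn ends (K \ A) v b := by
  induction h with
  | refl => exact absurd ha hb
  | @tail y z _ hyz ih =>
    by_cases hy : y ∈ A
    · exact ⟨y, z, hy, hb, hyz, .refl⟩
    · obtain ⟨u, v, hu, hv, huv, hvy⟩ := ih hy
      exact ⟨u, v, hu, hv, huv, hvy.tail ⟨⟨hyz.1, hy⟩, ⟨hyz.2.1, hb⟩, hyz.2.2⟩⟩

theorem connIn_diff_of_closedNbhd_subset {Q A K : Set V} {s : V}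
    (hQA : closedNbhd ends Q ⊆ A) (hAK : A ⊆ K) (hs : s ∈ A)
    (hK : ∀ w ∈ K, ReachIn ends K s w) (hD : ConnIn ends (A \ Q)) : ConnIn ends (K \ Q) := by
  refine connIn_of_forall_reachIn hD (Set.sdiff_subset_sdiff_left hAK) fun w ⟨hwK, hwQ⟩ => ?_
  by_cases hwA : w ∈ A
  · exact ⟨w, ⟨hwA, hwQ⟩, .refl⟩
  obtain ⟨u, v, huA, hvA, ⟨huK, hvK, e, he⟩, hvw⟩ := (hK w hwK).exists_exit hs hwA
  have huQ : u ∉ Q := fun huQ => hvA (hQA (Or.inr ⟨u, huQ, e, he⟩))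
  have hvQ : v ∉ Q := fun hvQ => hvA (hQA (Or.inl hvQ))
  have hvw' : ReachIn ends (K \ Q) v w :=
    hvw.mono (Set.sdiff_subset_sdiff_right (Set.subset_union_left.trans hQA))
  exact ⟨u, ⟨huA, huQ⟩, hvw'.symm.tail ⟨⟨hvK, hvQ⟩, ⟨huK, huQ⟩, e, he.trans Sym2.eq_swap⟩⟩

end InducedReachability

section CanonicalPrefix

variable {V E : Type} {ends : E → Sym2 V} {s t : V} {p : ℕ} {C : ℕ → Set E}

/-- `canonPrefix ends s p C m = V_0 ∪ ⋯ ∪ V_{m-1}`. -/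
def canonPrefix (ends : E → Sym2 V) (s : V) (p : ℕ) (C : ℕ → Set E) (m : ℕ) : Set V :=
  if m = 0 then ∅ else if m ≤ p + 1 then RS ends (C (m - 1)) {s} else Set.univ

theorem canonPrefix_zero : canonPrefix ends s p C 0 = ∅ := rfl

theorem canonPrefix_succ_of_le {m : ℕ} (hm : m ≤ p) :
    canonPrefix ends s p C (m + 1) = RS ends (C m) {s} := by
  simp [canonPrefix, hm]

theorem canonPrefix_of_gt {m : ℕ} (hm : p + 1 < m) : canonPrefix ends s p C m = Set.univ := by
  simp [canonPrefix, show m ≠ 0 by omega, show ¬m ≤ p + 1 by omega]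

theorem blockOf_eq_diff {m : ℕ} (hm : m ≤ p + 1) :
    blockOf ends s p C m = canonPrefix ends s p C (m + 1) \ canonPrefix ends s p C m := by
  rcases m with _ | m
  · simp [blockOf, canonPrefix_zero, canonPrefix_succ_of_le (Nat.zero_le p)]
  rcases hm.lt_or_eq with hm | hm
  · simp [blockOf, canonPrefix_succ_of_le (show m + 1 ≤ p by omega),
      canonPrefix_succ_of_le (show m ≤ p by omega), show m + 1 ≤ p by omega]
  · obtain rfl : m = p := by omega
    simp [blockOf, canonPrefix_of_gt (show m + 1 < m + 1 + 1 by omega),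
      canonPrefix_succ_of_le le_rfl]

theorem closedNbhd_canonPrefix_subset (hC : CanonSeq ends s t p C) (m : ℕ) :
    closedNbhd ends (canonPrefix ends s p C m) ⊆ canonPrefix ends s p C (m + 1) := by
  rcases m with _ | m
  · simp [closedNbhd, canonPrefix_zero]
  rcases le_or_gt (m + 1) p with hm | hm
  · rw [canonPrefix_succ_of_le (by omega), canonPrefix_succ_of_le hm]
    exact (hC.2.1 (m + 1) m.succ_pos hm).2.1
  · rw [canonPrefix_of_gt (m := m + 1 + 1) (by omega)]
    exact Set.subset_univ _

theorem monotone_canonPrefix (hC : CanonSeq ends s t p C) : Monotone (canonPrefix ends s p C) :=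
  monotone_nat_of_le_succ fun m => Set.subset_union_left.trans (closedNbhd_canonPrefix_subset hC m)

theorem mem_canonPrefix_succ (m : ℕ) : s ∈ canonPrefix ends s p C (m + 1) := by
  rcases le_or_gt m p with hm | hm
  · rw [canonPrefix_succ_of_le hm]
    exact ⟨s, rfl, .refl⟩
  · rw [canonPrefix_of_gt (by omega)]
    trivial

theorem reachIn_canonPrefix (hconn : ∀ u v : V, Reach ends ∅ u v) {m : ℕ} {w : V}
    (hw : w ∈ canonPrefix ends s p C m) : ReachIn ends (canonPrefix ends s p C m) s w := by
  unfold canonPrefix at hw ⊢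
  split_ifs at hw ⊢
  · exact absurd hw (Set.notMem_empty w)
  · obtain ⟨u, hu, hw⟩ := hw
    exact reachIn_RS_of_reach (hu ▸ hw)
  · exact (reachIn_RS_of_reach (hconn s w)).mono (Set.subset_univ _)

theorem unionBlocks_eq_diff (hC : CanonSeq ends s t p C) {a b : ℕ} (hb : b ≤ p + 1) :
    unionBlocks ends s p C a b =
      canonPrefix ends s p C (b + 1) \ canonPrefix ends s p C a := by
  classical
  have hP := monotone_canonPrefix hC
  ext x
  simp only [unionBlocks, Set.mem_iUnion, Set.mem_Icc, exists_prop]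
  constructor
  · rintro ⟨j, ⟨haj, hjb⟩, hx⟩
    rw [blockOf_eq_diff (by omega)] at hx
    exact ⟨hP (by omega) hx.1, fun hxa => hx.2 (hP haj hxa)⟩
  · rintro ⟨hxb, hxa⟩
    have hex : ∃ n, x ∈ canonPrefix ends s p C n := ⟨b + 1, hxb⟩
    have hn := Nat.find_spec hex
    have hnb : Nat.find hex ≤ b + 1 := Nat.find_min' hex hxb
    have han : a < Nat.find hex := lt_of_not_ge fun h => hxa (hP h hn)
    refine ⟨Nat.find hex - 1, ⟨by omega, by omega⟩, ?_⟩
    rw [blockOf_eq_diff (by omega), Nat.sub_add_cancel (by omega)]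
    exact ⟨hn, Nat.find_min hex (by omega)⟩

theorem connIn_unionBlocks_of_connIn_blockOf (hC : CanonSeq ends s t p C)
    (hconn : ∀ u v : V, Reach ends ∅ u v) {a b : ℕ} (hab : a ≤ b) (hb : b ≤ p + 1)
    (ha : ConnIn ends (blockOf ends s p C a)) : ConnIn ends (unionBlocks ends s p C a b) := by
  rw [blockOf_eq_diff (by omega)] at ha
  rw [unionBlocks_eq_diff hC hb]
  exact connIn_diff_of_closedNbhd_subset (closedNbhd_canonPrefix_subset hC a)
    (monotone_canonPrefix hC (by omega)) (mem_canonPrefix_succ a)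
    (fun _ => reachIn_canonPrefix hconn) ha

end CanonicalPrefix

section Bundles

variable {V E : Type} {ends : E → Sym2 V} {s : V} {p : ℕ} {C : ℕ → Set E}

theorem unionBlocks_union {a b c : ℕ} (hab : a < b) (hbc : b ≤ c) :
    unionBlocks ends s p C a (b - 1) ∪ unionBlocks ends s p C b c =
      unionBlocks ends s p C a c := by
  ext x
  simp only [unionBlocks, Set.mem_union, Set.mem_iUnion, Set.mem_Icc, exists_prop]
  constructor
  · rintro (⟨j, ⟨h1, h2⟩, hx⟩ | ⟨j, ⟨h1, h2⟩, hx⟩) <;> exact ⟨j, ⟨by omega, by omega⟩, hx⟩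
  · rintro ⟨j, ⟨h1, h2⟩, hx⟩
    by_cases hj : j ≤ b - 1
    · exact .inl ⟨j, ⟨h1, hj⟩, hx⟩
    · exact .inr ⟨j, ⟨by omega, h2⟩, hx⟩

theorem IsBundleSeq.le_of_le {q : ℕ} {st : ℕ → ℕ} (hW : IsBundleSeq ends s p C q st) {i j : ℕ}
    (hij : i ≤ j) (hj : j ≤ q + 2) : st i ≤ st j := by
  rcases hij.lt_or_eq with hij | rfl
  · exact (hW.2.2.2.1 i j hij hj).le
  · rfl

theorem bundleOf_union_bundleOf_succ {q : ℕ} {st : ℕ → ℕ} (hW : IsBundleSeq ends s p C q st)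
    {i : ℕ} (hi : i ≤ q) :
    bundleOf ends s p C st i ∪ bundleOf ends s p C st (i + 1) =
      unionBlocks ends s p C (st i) (st (i + 2) - 1) :=
  unionBlocks_union (hW.2.2.2.1 i (i + 1) (by omega) (by omega))
    (Nat.le_sub_one_of_lt (hW.2.2.2.1 (i + 1) (i + 2) (by omega) (by omega)))

end Bundles

theorem consecutive_bundles_connected_general {V E : Type}
    (ends : E → Sym2 V)
    (hconn : ∀ u v : V, Reach ends (∅ : Set E) u v)
    (s t : V)
    (p : ℕ) (C : ℕ → Set E) (hC : CanonSeq ends s t p C)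
    (q : ℕ) (st : ℕ → ℕ) (hW : IsBundleSeq ends s p C q st) :
    ∀ i : ℕ, i ≤ q →
      ConnIn ends (bundleOf ends s p C st i ∪ bundleOf ends s p C st (i + 1)) := by
  intro i hi
  rw [bundleOf_union_bundleOf_succ hW hi]
  have h2_le : st (i + 2) ≤ p + 2 := hW.2.2.1 ▸ hW.le_of_le (by omega) le_rfl
  obtain ⟨hst0, -, -, hst_lt, hstep⟩ := hW
  have h01 := hst_lt i (i + 1) (by omega) (by omega)
  have h12 := hst_lt (i + 1) (i + 2) (by omega) (by omega)
  rcases Nat.eq_zero_or_pos i with rfl | hi0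
  · rw [hst0] at h01 ⊢
    refine connIn_unionBlocks_of_connIn_blockOf hC hconn (by omega) (by omega) ?_
    simpa only [blockOf, if_pos] using connIn_RS (C 0) s
  rcases hstep i hi0 (by omega) with ⟨-, hblock⟩ | ⟨-, -, hmaximal⟩
  · exact connIn_unionBlocks_of_connIn_blockOf hC hconn (by omega) (by omega) hblock
  · exact hmaximal _ (by omega) (by omega)

/-- Any two consecutive bundles of a connected multigraph together
induce a connected subgraph. -/
theorem consecutive_bundles_connected {V E : Type} [Fintype V] [Fintype E]
    (ends : E → Sym2 V) (hloop : ∀ e, ¬ (ends e).IsDiag)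
    (hconn : ∀ u v : V, Reach ends (∅ : Set E) u v)
    (s t : V) (hst : s ≠ t)
    (p : ℕ) (C : ℕ → Set E) (hC : CanonSeq ends s t p C)
    (q : ℕ) (st : ℕ → ℕ) (hW : IsBundleSeq ends s p C q st) :
    ∀ i : ℕ, i ≤ q →
      ConnIn ends (bundleOf ends s p C st i ∪ bundleOf ends s p C st (i + 1)) :=
  consecutive_bundles_connected_general ends hconn s t p C hC q st hW

end FlowAug
end

section
/- Let G be a connected finite undirected multigraph with s, t ∈ V(G), s ≠ t, let W_0, …, W_{q+1} be the bundles of G, and let Z ⊆ E(G) be an (s,t)-cut with |Z| ≤ k. For all 0 ≤ a ≤ b ≤ q+1, the number ℓ of indices i with a ≤ i ≤ b such that W_i is affected by Z satisfies ℓ ≤ 2·|{e ∈ Z : both endpoints of e lie in W_{a−1} ∪ ⋯ ∪ W_{b+1}}| (reading W_{−1} and W_{q+2} as empty). In particular, at most 2k bundles are affected by Z. -/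
namespace FlowAug

section AuxLemmas
set_option linter.unusedSectionVars false

variable {V E : Type}

lemma sym2_exists (z : Sym2 V) : ∃ u v, z = s(u, v) := by
  induction z using Sym2.ind with
  | _ x y => exact ⟨x, y, rfl⟩

variable (ends : E → Sym2 V)

lemma adj_symm {X : Set E} {u v : V} (h : Adj ends X u v) : Adj ends X v u := by
  obtain ⟨e, he, h2⟩ := h
  exact ⟨e, he, by rw [h2, Sym2.eq_swap]⟩

lemma reach_symm {X : Set E} {u v : V} (h : Reach ends X u v) : Reach ends X v u := by
  induction h with
  | refl => exact .refl
  | tail _ hadj ih => exact Relation.ReflTransGen.head (adj_symm ends hadj) ih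

lemma mem_RS {X : Set E} {s v : V} : v ∈ RS ends X {s} ↔ Reach ends X s v := by
  simp [RS]

lemma reach_drop {X : Set E} {e : E} {a b : V}
    (h : Reach ends (X \ {e}) a b) :
    Reach ends X a b ∨ ∃ x y, ends e = s(x, y) ∧ Reach ends X a x ∧ Reach ends X y b := by
  induction h with
  | @tail c d _ hadj ih =>
    obtain ⟨e', he', hee⟩ := hadj
    by_cases heq : e' = e
    · subst heq
      rcases ih with hreach | ⟨x, y, hxy, hax, hyc⟩
      · exact Or.inr ⟨c, d, hee, hreach, .refl⟩
      · rcases Sym2.eq_iff.mp (hxy.symm.trans hee) with ⟨hc, hd⟩ | ⟨hc, hd⟩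
        · exact Or.inr ⟨x, y, hxy, hax, hd ▸ .refl⟩
        · exact Or.inl (hc ▸ hax)
    · have he'X : e' ∉ X := fun hmem => he' ⟨hmem, heq⟩
      rcases ih with hreach | ⟨x, y, hxy, hax, hyc⟩
      · exact Or.inl (hreach.tail ⟨e', he'X, hee⟩)
      · exact Or.inr ⟨x, y, hxy, hax, hyc.tail ⟨e', he'X, hee⟩⟩
  | refl => exact Or.inl .refl

/-- From a connected graph, a set `K` closed under `Adj X` and a path leaving `K`
produces an edge of `X` with one endpoint in `K` and one outside. -/
lemma exit_edge {X : Set E} {K : Set V} (hK : ∀ c d, c ∈ K → Adj ends X c d → d ∈ K)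
    {a b : V} (h : Reach ends (∅ : Set E) a b) (ha : a ∈ K) (hb : b ∉ K) :
    ∃ (u v : V) (e : E), e ∈ X ∧ ends e = s(u, v) ∧ u ∈ K ∧ v ∉ K := by
  induction h with
  | refl => exact absurd ha hb
  | @tail c d _ hadj ih =>
    by_cases hc : c ∈ K
    · obtain ⟨e', -, hee⟩ := hadj
      by_cases heX : e' ∈ X
      · exact ⟨c, d, e', heX, hee, hc, hb⟩
      · exact absurd (hK c d hc ⟨e', heX, hee⟩) hb
    · exact ih hc

/-- Every edge of a minimum `(s,t)`-cut joins the `s`-side to the `t`-side. -/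
lemma mincut_cross [Fintype E] {X : Set E} {s t : V}
    (hmin : IsMinimumCut ends X {s} {t}) {e : E} (he : e ∈ X) :
    ∃ u v, ends e = s(u, v) ∧ u ∈ RS ends X {s} ∧ v ∈ RS ends X {t} := by
  have hdisj : ∀ x, x ∈ RS ends X {s} → x ∈ RS ends X {t} → False := by
    intro x h1 h2
    exact Set.eq_empty_iff_forall_notMem.mp hmin.1 x ⟨h1, h2⟩
  have hnotcut : ¬ IsCut ends (X \ {e}) {s} {t} := by
    intro hcut
    have h1 := hmin.2 _ hcut
    have h2 : (X \ {e}).ncard < X.ncard :=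
      Set.ncard_diff_singleton_lt_of_mem he (Set.toFinite X)
    omega
  rw [IsCut, Set.eq_empty_iff_forall_notMem] at hnotcut
  push_neg at hnotcut
  obtain ⟨w, hws, hwt⟩ := hnotcut
  rw [mem_RS] at hws hwt
  rcases reach_drop ends hws with hsw | ⟨x, y, hxy, hsx, hyw⟩
  · rcases reach_drop ends hwt with htw | ⟨x', y', hxy', htx', hy'w⟩
    · exact absurd ((mem_RS ends).mpr htw) (fun h => hdisj w ((mem_RS ends).mpr hsw) h)
    · have hsy' : Reach ends X s y' := hsw.trans (reach_symm ends hy'w)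
      exact ⟨y', x', hxy'.trans Sym2.eq_swap, (mem_RS ends).mpr hsy', (mem_RS ends).mpr htx'⟩
  · rcases reach_drop ends hwt with htw | ⟨x', y', hxy', htx', hy'w⟩
    · have hty : Reach ends X t y := htw.trans (reach_symm ends hyw)
      exact ⟨x, y, hxy, (mem_RS ends).mpr hsx, (mem_RS ends).mpr hty⟩
    · rcases Sym2.eq_iff.mp (hxy.symm.trans hxy') with ⟨h1, h2⟩ | ⟨h1, h2⟩
      · exact absurd ((mem_RS ends).mpr (h1 ▸ htx')) (fun h => hdisj x ((mem_RS ends).mpr hsx) h)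
      · exact ⟨x, y, hxy, (mem_RS ends).mpr hsx, (mem_RS ends).mpr (h2 ▸ htx')⟩

/-- For a minimum cut, every vertex not reachable from `s` is reachable from `t`. -/
lemma mincut_reach_t [Fintype E] {X : Set E} {s t : V}
    (hconn : ∀ u v : V, Reach ends (∅ : Set E) u v)
    (hmin : IsMinimumCut ends X {s} {t}) {v : V}
    (hv : v ∉ RS ends X {s}) : Reach ends X t v := by
  set K : Set V := {w | Reach ends X v w} with hKdef
  have hKcl : ∀ c d, c ∈ K → Adj ends X c d → d ∈ K := fun c d hc hadj => hc.tail hadj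
  have hsK : s ∉ K := by
    intro hsK
    exact hv ((mem_RS ends).mpr (reach_symm ends hsK))
  obtain ⟨c, d, e', heX, hee, hcK, -⟩ :=
    exit_edge ends hKcl (hconn v s) (Relation.ReflTransGen.refl) hsK
  obtain ⟨u', v', huv, hu', hv'⟩ := mincut_cross ends hmin heX
  rcases Sym2.eq_iff.mp (hee.symm.trans huv) with ⟨h1, -⟩ | ⟨h1, -⟩
  · exact absurd ((mem_RS ends).mpr (((mem_RS ends).mp (h1 ▸ hu')).trans (reach_symm ends hcK))) hv
  · exact ((mem_RS ends).mp (h1 ▸ hv')).trans (reach_symm ends hcK)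

lemma reach_mem_closed {X : Set E} {B : Set V}
    (hBcl : ∀ c d, c ∈ B → Adj ends X c d → d ∈ B)
    {u v : V} (h : Reach ends X u v) (hu : u ∈ B) : v ∈ B := by
  induction h with
  | refl => exact hu
  | tail _ hadj ih => exact hBcl _ _ ih hadj

lemma reach_to_reachIn {X : Set E} {B : Set V}
    (hBcl : ∀ c d, c ∈ B → Adj ends X c d → d ∈ B)
    {u v : V} (h : Reach ends X u v) (hu : u ∈ B) : ReachIn ends B u v := by
  induction h with
  | refl => exact .refl
  | @tail c d huc hadj ih =>
    have hc : c ∈ B := reach_mem_closed ends hBcl huc hu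
    have hd : d ∈ B := hBcl _ _ hc hadj
    obtain ⟨e', -, hee⟩ := hadj
    exact ih.tail ⟨hc, hd, e', hee⟩

lemma reachIn_to_reach {B : Set V} {Z : Set E}
    (hii : ∀ e ∈ Z, ¬ ∀ x ∈ ends e, x ∈ B)
    {u v : V} (h : ReachIn ends B u v) : Reach ends Z u v := by
  induction h with
  | refl => exact .refl
  | tail _ hadj ih =>
    obtain ⟨hc, hd, e, hee⟩ := hadj
    refine ih.tail ⟨e, fun heZ => hii e heZ ?_, hee⟩
    intro x hx
    rw [hee, Sym2.mem_iff] at hx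
    rcases hx with rfl | rfl
    · exact hc
    · exact hd

/-- The unaffectedness criterion: if `W ⊆ B`, `G[B]` is connected, no edge of `Z`
has an endpoint in `W`, and no edge of `Z` has both endpoints in `B`, then `W` is
unaffected by `Z`. -/
lemma unaffected_of {Z : Set E} {W B : Set V} (hWB : W ⊆ B) (hconnB : ConnIn ends B)
    (hi : ∀ e ∈ Z, ∀ x ∈ ends e, x ∉ W)
    (hii : ∀ e ∈ Z, ¬ ∀ x ∈ ends e, x ∈ B) : Unaffected ends Z W := by
  have key : ∀ u' ∈ closedNbhd ends W, ∃ w ∈ W, Reach ends Z u' w := by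
    intro u' hu'
    rcases hu' with hWm | ⟨w, hwW, e, hee⟩
    · exact ⟨u', hWm, .refl⟩
    · refine ⟨w, hwW, ?_⟩
      have heZ : e ∉ Z := fun h => hi e h w (by rw [hee]; exact Sym2.mem_mk_left w u') hwW
      exact Relation.ReflTransGen.single (adj_symm ends ⟨e, heZ, hee⟩)
  intro u hu v hv
  obtain ⟨w, hwW, hw⟩ := key u hu
  obtain ⟨w', hw'W, hw'⟩ := key v hv
  have hww' : Reach ends Z w w' :=
    reachIn_to_reach ends hii (hconnB w (hWB hwW) w' (hWB hw'W))
  exact hw.trans (hww'.trans (reach_symm ends hw'))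

end AuxLemmas

section Blocks
set_option linter.unusedSectionVars false
variable {V E : Type} (ends : E → Sym2 V) (s t : V) (p : ℕ) (C : ℕ → Set E)

/-- The index of the block containing a vertex. -/
noncomputable def rnk (v : V) : ℕ :=
  sInf ({j | v ∈ RS ends (C j) {s} ∧ j ≤ p} ∪ {p + 1})

lemma Cmin (hC : CanonSeq ends s t p C) {i : ℕ} (hi : i ≤ p) :
    IsMinimumCut ends (C i) {s} {t} := by
  rcases Nat.eq_zero_or_pos i with rfl | h
  · exact hC.1.1
  · exact (hC.2.1 i h hi).1

lemma Cnbhd (hC : CanonSeq ends s t p C) {i : ℕ} (h1 : 1 ≤ i) (h2 : i ≤ p) :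
    closedNbhd ends (RS ends (C (i - 1)) {s}) ⊆ RS ends (C i) {s} :=
  (hC.2.1 i h1 h2).2.1

lemma RS_mono (hC : CanonSeq ends s t p C) {i j : ℕ} (hij : i ≤ j) (hj : j ≤ p) :
    RS ends (C i) {s} ⊆ RS ends (C j) {s} := by
  induction j with
  | zero =>
    have : i = 0 := by omega
    subst this; exact subset_rfl
  | succ n ih =>
    rcases Nat.lt_or_ge i (n + 1) with h | h
    · have hstep : RS ends (C n) {s} ⊆ RS ends (C (n + 1)) {s} := by
        have h2 := Cnbhd ends s t p C hC (i := n + 1) (by omega) hj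
        simp only [Nat.add_sub_cancel] at h2
        exact fun x hx => h2 (Or.inl hx)
      exact (ih (by omega) (by omega)).trans hstep
    · have : i = n + 1 := by omega
      subst this; exact subset_rfl

lemma rnk_le (v : V) : rnk ends s p C v ≤ p + 1 := Nat.sInf_le (Or.inr rfl)

lemma rnk_spec (v : V) :
    (rnk ends s p C v ≤ p ∧ v ∈ RS ends (C (rnk ends s p C v)) {s}) ∨
      rnk ends s p C v = p + 1 := by
  have h := Nat.sInf_mem (s := {j | v ∈ RS ends (C j) {s} ∧ j ≤ p} ∪ {p + 1})
    ⟨p + 1, Or.inr rfl⟩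
  rcases h with ⟨h1, h2⟩ | h
  · exact Or.inl ⟨h2, h1⟩
  · exact Or.inr h

lemma rnk_not_lt {v : V} {j : ℕ} (hj : j < rnk ends s p C v) (hjp : j ≤ p) :
    v ∉ RS ends (C j) {s} := fun h => Nat.notMem_of_lt_sInf hj (Or.inl ⟨h, hjp⟩)

lemma rnk_le_of_mem {v : V} {j : ℕ} (hjp : j ≤ p) (h : v ∈ RS ends (C j) {s}) :
    rnk ends s p C v ≤ j := Nat.sInf_le (Or.inl ⟨h, hjp⟩)

lemma mem_block_rnk (v : V) : v ∈ blockOf ends s p C (rnk ends s p C v) := by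
  unfold blockOf
  rcases rnk_spec ends s p C v with ⟨h1, h2⟩ | h
  · by_cases h0 : rnk ends s p C v = 0
    · rw [if_pos h0]; rw [h0] at h2; exact h2
    · rw [if_neg h0, if_pos h1]
      exact ⟨h2, rnk_not_lt ends s p C (by omega) (by omega)⟩
  · rw [if_neg (by omega), if_neg (by omega)]
    exact ⟨trivial, rnk_not_lt ends s p C (by omega) le_rfl⟩

lemma rnk_eq_of_mem_block (hC : CanonSeq ends s t p C) {v : V} {j : ℕ}
    (hj : j ≤ p + 1) (h : v ∈ blockOf ends s p C j) : rnk ends s p C v = j := by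
  unfold blockOf at h
  by_cases h0 : j = 0
  · subst h0; rw [if_pos rfl] at h
    have := rnk_le_of_mem ends s p C (Nat.zero_le p) h
    omega
  · rw [if_neg h0] at h
    by_cases h1 : j ≤ p
    · rw [if_pos h1] at h
      have hle := rnk_le_of_mem ends s p C h1 h.1
      by_contra hne
      rcases rnk_spec ends s p C v with ⟨hq1, hq2⟩ | hq
      · exact h.2 (RS_mono ends s t p C hC (by omega) (by omega) hq2)
      · omega
    · rw [if_neg h1] at h
      by_contra hne
      have hlt : rnk ends s p C v ≤ p := by
        have := rnk_le ends s p C v; omega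
      rcases rnk_spec ends s p C v with ⟨hq1, hq2⟩ | hq
      · exact h.2 (RS_mono ends s t p C hC hq1 le_rfl hq2)
      · omega

lemma rnk_adj (hC : CanonSeq ends s t p C) {e : E} {x y : V}
    (hxy : ends e = s(x, y)) :
    rnk ends s p C y ≤ rnk ends s p C x + 1 := by
  by_cases h : rnk ends s p C x + 1 ≤ p
  · rcases rnk_spec ends s p C x with ⟨h1, h2⟩ | heq
    · have hy : y ∈ RS ends (C (rnk ends s p C x + 1)) {s} := by
        have hnb := Cnbhd ends s t p C hC (i := rnk ends s p C x + 1) (by omega) h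
        simp only [Nat.add_sub_cancel] at hnb
        exact hnb (Or.inr ⟨x, h2, e, hxy⟩)
      exact rnk_le_of_mem ends s p C h hy
    · omega
  · have := rnk_le ends s p C y; omega

lemma mem_unionBlocks_iff {v : V} {a b : ℕ} :
    v ∈ unionBlocks ends s p C a b ↔
      ∃ m, a ≤ m ∧ m ≤ b ∧ v ∈ blockOf ends s p C m := by
  simp [unionBlocks, Set.mem_Icc, and_assoc]

lemma unionBlocks_self (a : ℕ) : unionBlocks ends s p C a a = blockOf ends s p C a := by
  ext v
  rw [mem_unionBlocks_iff]
  constructor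
  · rintro ⟨m, h1, h2, h3⟩
    have : m = a := by omega
    exact this ▸ h3
  · exact fun h => ⟨a, le_rfl, le_rfl, h⟩

lemma unionBlocks_eq_compl (hC : CanonSeq ends s t p C) {j : ℕ}
    (h1 : 1 ≤ j) (h2 : j ≤ p + 1) :
    unionBlocks ends s p C j (p + 1) = (RS ends (C (j - 1)) {s})ᶜ := by
  ext v
  rw [mem_unionBlocks_iff]
  constructor
  · rintro ⟨m, hm1, hm2, hv⟩
    have hrnk : rnk ends s p C v = m := rnk_eq_of_mem_block ends s t p C hC hm2 hv
    intro hmem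
    have := rnk_le_of_mem ends s p C (j := j - 1) (by omega) hmem
    omega
  · intro hv
    have hge : j ≤ rnk ends s p C v := by
      by_contra hlt
      rcases rnk_spec ends s p C v with ⟨hq1, hq2⟩ | hq
      · exact hv (RS_mono ends s t p C hC (by omega) (by omega) hq2)
      · omega
    exact ⟨rnk ends s p C v, hge, rnk_le ends s p C v, mem_block_rnk ends s p C v⟩

lemma connIn_RS0 : ConnIn ends (RS ends (C 0) {s}) := by
  intro u hu v hv
  have hcl : ∀ c d, c ∈ RS ends (C 0) {s} → Adj ends (C 0) c d →
      d ∈ RS ends (C 0) {s} :=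
    fun c d hc hadj => (mem_RS ends).mpr (((mem_RS ends).mp hc).tail hadj)
  exact reach_to_reachIn ends hcl
    ((reach_symm ends ((mem_RS ends).mp hu)).trans ((mem_RS ends).mp hv)) hu

lemma connIn_compl [Fintype E] {X : Set E}
    (hconn : ∀ u v : V, Reach ends (∅ : Set E) u v)
    (hmin : IsMinimumCut ends X {s} {t}) :
    ConnIn ends ((RS ends X {s})ᶜ) := by
  intro u hu v hv
  have hcl : ∀ c d, c ∈ (RS ends X {s})ᶜ → Adj ends X c d → d ∈ (RS ends X {s})ᶜ := by
    intro c d hc hadj hd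
    exact hc ((mem_RS ends).mpr (((mem_RS ends).mp hd).tail (adj_symm ends hadj)))
  have hu' := mincut_reach_t ends hconn hmin hu
  have hv' := mincut_reach_t ends hconn hmin hv
  exact reach_to_reachIn ends hcl ((reach_symm ends hu').trans hv') hu

end Blocks

section Bundles
set_option linter.unusedSectionVars false
variable {V E : Type}

/-- The index of the bundle containing a vertex. -/
noncomputable def bidx (ends : E → Sym2 V) (s : V) (p : ℕ) (C : ℕ → Set E)
    (st : ℕ → ℕ) (v : V) : ℕ :=
  sInf {i | rnk ends s p C v < st (i + 1)}

variable (ends : E → Sym2 V) (s t : V) (p : ℕ) (C : ℕ → Set E) (q : ℕ) (st : ℕ → ℕ)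

lemma st_lt (hW : IsBundleSeq ends s p C q st) {i j : ℕ} (hij : i < j) (hj : j ≤ q + 2) :
    st i < st j :=
  hW.2.2.2.1 i j hij hj

lemma st_mono_le (hW : IsBundleSeq ends s p C q st) {i j : ℕ} (hij : i ≤ j)
    (hj : j ≤ q + 2) : st i ≤ st j := by
  rcases eq_or_lt_of_le hij with rfl | h
  · exact le_rfl
  · exact (st_lt ends s p C q st hW h hj).le

lemma st_le_p2 (hW : IsBundleSeq ends s p C q st) {i : ℕ} (hi : i ≤ q + 2) :
    st i ≤ p + 2 := by
  have h := st_mono_le ends s p C q st hW hi le_rfl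
  rw [hW.2.2.1] at h
  exact h

lemma st_pos (hW : IsBundleSeq ends s p C q st) {i : ℕ} (h1 : 1 ≤ i) (hi : i ≤ q + 2) :
    1 ≤ st i := by
  have h := st_lt ends s p C q st hW (show 0 < i by omega) hi
  rw [hW.1] at h
  omega

lemma bidx_le (hW : IsBundleSeq ends s p C q st) (v : V) :
    bidx ends s p C st v ≤ q + 1 := by
  refine Nat.sInf_le ?_
  show rnk ends s p C v < st (q + 1 + 1)
  rw [show q + 1 + 1 = q + 2 from rfl, hW.2.2.1]
  have := rnk_le ends s p C v
  omega

lemma rnk_lt_st_bidx_succ (hW : IsBundleSeq ends s p C q st) (v : V) :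
    rnk ends s p C v < st (bidx ends s p C st v + 1) := by
  have h := Nat.sInf_mem (s := {i | rnk ends s p C v < st (i + 1)})
    ⟨q + 1, by
      show rnk ends s p C v < st (q + 1 + 1)
      rw [show q + 1 + 1 = q + 2 from rfl, hW.2.2.1]
      have := rnk_le ends s p C v
      omega⟩
  exact h

lemma st_bidx_le (hW : IsBundleSeq ends s p C q st) (v : V) :
    st (bidx ends s p C st v) ≤ rnk ends s p C v := by
  by_cases h0 : bidx ends s p C st v = 0
  · rw [h0, hW.1]; omega
  · have h := Nat.notMem_of_lt_sInf
      (s := {i | rnk ends s p C v < st (i + 1)})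
      (show bidx ends s p C st v - 1 < bidx ends s p C st v by omega)
    simp only [Set.mem_setOf_eq, not_lt] at h
    have heq : bidx ends s p C st v - 1 + 1 = bidx ends s p C st v := by omega
    rwa [heq] at h

lemma mem_bundle_bidx (hW : IsBundleSeq ends s p C q st) (v : V) :
    v ∈ bundleOf ends s p C st (bidx ends s p C st v) := by
  unfold bundleOf
  rw [mem_unionBlocks_iff]
  refine ⟨rnk ends s p C v, st_bidx_le ends s p C q st hW v, ?_,
    mem_block_rnk ends s p C v⟩
  have := rnk_lt_st_bidx_succ ends s p C q st hW v
  omega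

lemma bidx_eq_of_mem_bundle (hC : CanonSeq ends s t p C)
    (hW : IsBundleSeq ends s p C q st) {v : V} {i : ℕ}
    (hi : i ≤ q + 1) (h : v ∈ bundleOf ends s p C st i) :
    bidx ends s p C st v = i := by
  unfold bundleOf at h
  rw [mem_unionBlocks_iff] at h
  obtain ⟨m, hm1, hm2, hv⟩ := h
  have hst1 : st (i + 1) ≤ p + 2 := st_le_p2 ends s p C q st hW (by omega)
  have hst0 : 1 ≤ st (i + 1) := st_pos ends s p C q st hW (by omega) (by omega)
  have hrnk : rnk ends s p C v = m :=
    rnk_eq_of_mem_block ends s t p C hC (by omega) hv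
  have hub : bidx ends s p C st v ≤ i := by
    refine Nat.sInf_le ?_
    show rnk ends s p C v < st (i + 1)
    omega
  have hlb : i ≤ bidx ends s p C st v := by
    by_contra hcon
    have h1 : bidx ends s p C st v + 1 ≤ i := by omega
    have h2 : st (bidx ends s p C st v + 1) ≤ st i :=
      st_mono_le ends s p C q st hW h1 (by omega)
    have h3 := rnk_lt_st_bidx_succ ends s p C q st hW v
    omega
  omega

lemma block_st_succ_sub_bundle (hW : IsBundleSeq ends s p C q st) {i : ℕ} (hi : i ≤ q) :
    blockOf ends s p C (st (i + 1)) ⊆ bundleOf ends s p C st (i + 1) := by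
  intro x hx
  unfold bundleOf
  rw [mem_unionBlocks_iff]
  refine ⟨st (i + 1), le_rfl, ?_, hx⟩
  have := st_lt ends s p C q st hW (show i + 1 < i + 1 + 1 by omega) (by omega)
  omega

lemma bundle_subset_next {i : ℕ} :
    bundleOf ends s p C st i ⊆ unionBlocks ends s p C (st i) (st (i + 1)) := by
  intro x hx
  unfold bundleOf at hx
  rw [mem_unionBlocks_iff] at hx
  rw [mem_unionBlocks_iff]
  obtain ⟨m, h1, h2, h3⟩ := hx
  exact ⟨m, h1, by omega, h3⟩

lemma bidx_le_succ (hW : IsBundleSeq ends s p C q st) {x w : V}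
    (h : rnk ends s p C x ≤ rnk ends s p C w + 1) :
    bidx ends s p C st x ≤ bidx ends s p C st w + 1 := by
  by_cases hb : bidx ends s p C st w ≤ q
  · refine Nat.sInf_le ?_
    show rnk ends s p C x < st (bidx ends s p C st w + 1 + 1)
    have h1 := rnk_lt_st_bidx_succ ends s p C q st hW w
    have h2 := st_lt ends s p C q st hW
      (show bidx ends s p C st w + 1 < bidx ends s p C st w + 1 + 1 by omega) (by omega)
    omega
  · have h1 := bidx_le ends s p C q st hW x
    have h2 := bidx_le ends s p C q st hW w
    omega

/-- Key claim: an affected bundle yields an edge of `Z` touching it, or (if not the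
last bundle) an edge of `Z` with both endpoints in the first block after it. -/
lemma claim_aux [Fintype E]
    (hconn : ∀ u v : V, Reach ends (∅ : Set E) u v)
    (hC : CanonSeq ends s t p C)
    (hW : IsBundleSeq ends s p C q st) (Z : Set E) {i : ℕ} (hi : i ≤ q + 1)
    (haff : ¬ Unaffected ends Z (bundleOf ends s p C st i)) :
    ∃ e, e ∈ Z ∧ ((∃ x ∈ ends e, x ∈ bundleOf ends s p C st i) ∨
      (i ≤ q ∧ ∀ x ∈ ends e, x ∈ blockOf ends s p C (st (i + 1)))) := by
  by_contra hcon
  push_neg at hcon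
  have hi' : ∀ e ∈ Z, ∀ x ∈ ends e, x ∉ bundleOf ends s p C st i :=
    fun e he => (hcon e he).1
  have hii_self : ∀ e ∈ Z, ¬ ∀ x ∈ ends e, x ∈ bundleOf ends s p C st i := by
    intro e heZ hall
    obtain ⟨x, y, hxy⟩ := sym2_exists (ends e)
    have hx : x ∈ ends e := by rw [hxy]; exact Sym2.mem_mk_left x y
    exact hi' e heZ x hx (hall x hx)
  apply haff
  by_cases h0 : i = 0
  · subst h0
    have hbeq : bundleOf ends s p C st 0 = RS ends (C 0) {s} := by
      unfold bundleOf
      rw [show (0 : ℕ) + 1 = 1 from rfl, hW.1, hW.2.1]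
      rw [show (1 : ℕ) - 1 = 0 from rfl, unionBlocks_self]
      simp [blockOf]
    refine unaffected_of ends subset_rfl ?_ hi' hii_self
    rw [hbeq]
    exact connIn_RS0 ends s C
  · by_cases hq1 : i = q + 1
    · subst hq1
      have hstq : 1 ≤ st (q + 1) := st_pos ends s p C q st hW (by omega) (by omega)
      have hstq2 : st (q + 1) ≤ p + 1 := by
        have h := st_lt ends s p C q st hW (show q + 1 < q + 2 by omega) le_rfl
        rw [hW.2.2.1] at h
        omega
      have hbeq : bundleOf ends s p C st (q + 1) =
          (RS ends (C (st (q + 1) - 1)) {s})ᶜ := by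
        unfold bundleOf
        rw [show q + 1 + 1 = q + 2 from rfl, hW.2.2.1,
          show p + 2 - 1 = p + 1 from rfl]
        exact unionBlocks_eq_compl ends s t p C hC hstq hstq2
      refine unaffected_of ends subset_rfl ?_ hi' hii_self
      rw [hbeq]
      exact connIn_compl ends s t hconn
        (Cmin ends s t p C hC (show st (q + 1) - 1 ≤ p by omega))
    · have h1i : 1 ≤ i := by omega
      have hiq : i ≤ q := by omega
      rcases hW.2.2.2.2 i h1i (by omega) with ⟨hsteq, hconnblk⟩ | ⟨-, -, hallj⟩
      · have hbeq : bundleOf ends s p C st i = blockOf ends s p C (st i) := by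
          unfold bundleOf
          rw [hsteq]
          simp only [Nat.add_sub_cancel]
          exact unionBlocks_self ends s p C (st i)
        refine unaffected_of ends subset_rfl ?_ hi' hii_self
        rw [hbeq]; exact hconnblk
      · have hstpos : 1 ≤ st (i + 1) := st_pos ends s p C q st hW (by omega) (by omega)
        have hstle : st (i + 1) ≤ p + 1 := by
          have h2 := st_lt ends s p C q st hW (show i + 1 < q + 2 by omega) le_rfl
          rw [hW.2.2.1] at h2
          omega
        have hconnB : ConnIn ends (unionBlocks ends s p C (st i) (st (i + 1))) :=
          hallj (st (i + 1)) (by omega) hstle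
        refine unaffected_of ends (bundle_subset_next ends s p C st) hconnB hi' ?_
        intro e heZ hall
        obtain ⟨x, hxmem, hxnblk⟩ := (hcon e heZ).2 hiq
        have hxB := hall x hxmem
        rw [mem_unionBlocks_iff] at hxB
        obtain ⟨m, hm1, hm2, hxm⟩ := hxB
        by_cases hmlt : m ≤ st (i + 1) - 1
        · refine hi' e heZ x hxmem ?_
          unfold bundleOf
          rw [mem_unionBlocks_iff]
          exact ⟨m, hm1, hmlt, hxm⟩
        · have hmeq : m = st (i + 1) := by omega
          exact hxnblk (hmeq ▸ hxm)

end Bundles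


/-- Let `Z` be an `(s,t)`-cut with `|Z| ≤ k`.  For all
`0 ≤ a ≤ b ≤ q+1`, the number of indices `i ∈ [a,b]` whose bundle `W_i` is affected by
`Z` is at most twice the number of edges of `Z` with both endpoints in
`W_{a-1} ∪ ⋯ ∪ W_{b+1}` (out-of-range bundles read as empty).  In particular, at most
`2k` bundles are affected by `Z`. -/
theorem affected_bundles_bound {V E : Type} [Fintype V] [Fintype E]
    (ends : E → Sym2 V) (hloop : ∀ e, ¬ (ends e).IsDiag)
    (hconn : ∀ u v : V, Reach ends (∅ : Set E) u v)
    (s t : V) (hst : s ≠ t)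
    (p : ℕ) (C : ℕ → Set E) (hC : CanonSeq ends s t p C)
    (q : ℕ) (st : ℕ → ℕ) (hW : IsBundleSeq ends s p C q st)
    (Z : Set E) (hZ : IsCut ends Z {s} {t}) (k : ℕ) (hk : Z.ncard ≤ k) :
    (∀ a b : ℕ, a ≤ b → b ≤ q + 1 →
      {i : ℕ | a ≤ i ∧ i ≤ b ∧ ¬ Unaffected ends Z (bundleOf ends s p C st i)}.ncard ≤
        2 * {e | e ∈ Z ∧ ∀ v ∈ ends e,
              v ∈ ⋃ i ∈ Set.Icc (a - 1) (b + 1) ∩ Set.Iic (q + 1),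
                    bundleOf ends s p C st i}.ncard) ∧
    {i : ℕ | i ≤ q + 1 ∧ ¬ Unaffected ends Z (bundleOf ends s p C st i)}.ncard ≤
      2 * k := by
  classical
  have hEne : Nonempty E := by
    rcases (hconn s t).cases_head with heq | ⟨c, ⟨e, -, -⟩, -⟩
    · exact absurd heq hst
    · exact ⟨e⟩
  obtain ⟨e0⟩ := hEne
  have hmain : ∀ a b : ℕ, a ≤ b → b ≤ q + 1 →
      {i : ℕ | a ≤ i ∧ i ≤ b ∧ ¬ Unaffected ends Z (bundleOf ends s p C st i)}.ncard ≤
        2 * {e | e ∈ Z ∧ ∀ v ∈ ends e,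
              v ∈ ⋃ i ∈ Set.Icc (a - 1) (b + 1) ∩ Set.Iic (q + 1),
                    bundleOf ends s p C st i}.ncard := by
    intro a b hab hb
    set S : Set ℕ :=
      {i | a ≤ i ∧ i ≤ b ∧ ¬ Unaffected ends Z (bundleOf ends s p C st i)} with hSdef
    set T : Set E := {e | e ∈ Z ∧ ∀ v ∈ ends e,
        v ∈ ⋃ i ∈ Set.Icc (a - 1) (b + 1) ∩ Set.Iic (q + 1),
              bundleOf ends s p C st i} with hTdef
    have hSmem : ∀ i ∈ S, a ≤ i ∧ i ≤ b ∧
        ¬ Unaffected ends Z (bundleOf ends s p C st i) := fun i hi => hi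
    have hprop : ∀ i ∈ S, ∃ e, e ∈ Z ∧
        ((∃ x ∈ ends e, x ∈ bundleOf ends s p C st i) ∨
          (i ≤ q ∧ ∀ x ∈ ends e, x ∈ blockOf ends s p C (st (i + 1)))) := by
      intro i hi
      obtain ⟨h1, h2, h3⟩ := hSmem i hi
      exact claim_aux ends s t p C q st hconn hC hW Z (by omega) h3
    set F : ℕ → E := fun i => if h : i ∈ S then (hprop i h).choose else e0 with hFdef
    have hFZ : ∀ i ∈ S, F i ∈ Z := by
      intro i h
      simp only [hFdef, dif_pos h]
      exact (hprop i h).choose_spec.1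
    have hFspec : ∀ i ∈ S,
        (∃ x ∈ ends (F i), x ∈ bundleOf ends s p C st i) ∨
          (i ≤ q ∧ ∀ x ∈ ends (F i), x ∈ blockOf ends s p C (st (i + 1))) := by
      intro i h
      simp only [hFdef, dif_pos h]
      exact (hprop i h).choose_spec.2
    -- every witness edge lies in T
    have himg : ∀ i ∈ S, F i ∈ T := by
      intro i hiS
      obtain ⟨hia, hib, -⟩ := hSmem i hiS
      refine ⟨hFZ i hiS, ?_⟩
      intro x hx
      rcases hFspec i hiS with ⟨w, hwmem, hwbun⟩ | ⟨hiq, hall⟩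
      · have hbw : bidx ends s p C st w = i :=
          bidx_eq_of_mem_bundle ends s t p C q st hC hW (by omega) hwbun
        by_cases hxw : x = w
        · subst hxw
          refine Set.mem_biUnion (x := i)
            ⟨Set.mem_Icc.mpr ⟨by omega, by omega⟩, Set.mem_Iic.mpr (by omega)⟩ hwbun
        · have hxy : ends (F i) = s(w, x) := by
            obtain ⟨u1, v1, h12⟩ := sym2_exists (ends (F i))
            rw [h12, Sym2.mem_iff] at hx hwmem
            rcases hx with rfl | rfl <;> rcases hwmem with rfl | rfl
            · exact absurd rfl hxw
            · exact h12.trans Sym2.eq_swap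
            · exact h12
            · exact absurd rfl hxw
          have hr1 : rnk ends s p C x ≤ rnk ends s p C w + 1 :=
            rnk_adj ends s t p C hC hxy
          have hr2 : rnk ends s p C w ≤ rnk ends s p C x + 1 :=
            rnk_adj ends s t p C hC (hxy.trans Sym2.eq_swap)
          have hb1 : bidx ends s p C st x ≤ bidx ends s p C st w + 1 :=
            bidx_le_succ ends s p C q st hW hr1
          have hb2 : bidx ends s p C st w ≤ bidx ends s p C st x + 1 :=
            bidx_le_succ ends s p C q st hW hr2
          have hble := bidx_le ends s p C q st hW x
          refine Set.mem_biUnion (x := bidx ends s p C st x)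
            ⟨Set.mem_Icc.mpr ⟨by omega, by omega⟩, Set.mem_Iic.mpr (by omega)⟩
            (mem_bundle_bidx ends s p C q st hW x)
      · have hxblk : x ∈ blockOf ends s p C (st (i + 1)) := hall x hx
        have hxbun : x ∈ bundleOf ends s p C st (i + 1) :=
          block_st_succ_sub_bundle ends s p C q st hW hiq hxblk
        refine Set.mem_biUnion (x := i + 1)
          ⟨Set.mem_Icc.mpr ⟨by omega, by omega⟩, Set.mem_Iic.mpr (by omega)⟩ hxbun
    have hSfin : S.Finite := (Set.finite_Icc a b).subset (fun i hi => ⟨hi.1, hi.2.1⟩)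
    have hTfin : T.Finite := Set.toFinite _
    have hcard : hSfin.toFinset.card ≤ 2 * (hSfin.toFinset.image F).card := by
      refine Finset.card_le_mul_card_image _ 2 ?_
      intro e he
      obtain ⟨u, v, huv⟩ := sym2_exists (ends e)
      have hsub : hSfin.toFinset.filter (fun i => F i = e) ⊆
          {bidx ends s p C st u,
            if bidx ends s p C st u = bidx ends s p C st v
            then bidx ends s p C st u - 1 else bidx ends s p C st v} := by
        intro i hifil
        rw [Finset.mem_filter, Set.Finite.mem_toFinset] at hifil
        obtain ⟨hiS, hFe⟩ := hifil
        obtain ⟨hia, hib, -⟩ := hSmem i hiS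
        have hprops := hFspec i hiS
        rw [hFe] at hprops
        simp only [Finset.mem_insert, Finset.mem_singleton]
        rcases hprops with ⟨w, hwmem, hwbun⟩ | ⟨hiq, hall⟩
        · have hbw : bidx ends s p C st w = i :=
            bidx_eq_of_mem_bundle ends s t p C q st hC hW (by omega) hwbun
          have hwuv : w = u ∨ w = v := by
            rw [huv, Sym2.mem_iff] at hwmem; exact hwmem
          rcases hwuv with rfl | rfl
          · exact Or.inl hbw.symm
          · by_cases hAB : bidx ends s p C st u = bidx ends s p C st w
            · exact Or.inl (hAB.trans hbw).symm
            · right; rw [if_neg hAB]; exact hbw.symm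
        · have humem : u ∈ ends e := by rw [huv]; exact Sym2.mem_mk_left u v
          have hvmem : v ∈ ends e := by rw [huv]; exact Sym2.mem_mk_right u v
          have hAu : bidx ends s p C st u = i + 1 :=
            bidx_eq_of_mem_bundle ends s t p C q st hC hW (by omega)
              (block_st_succ_sub_bundle ends s p C q st hW hiq (hall u humem))
          have hBv : bidx ends s p C st v = i + 1 :=
            bidx_eq_of_mem_bundle ends s t p C q st hC hW (by omega)
              (block_st_succ_sub_bundle ends s p C q st hW hiq (hall v hvmem))
          right
          rw [if_pos (hAu.trans hBv.symm)]
          omega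
      calc (hSfin.toFinset.filter (fun i => F i = e)).card
          ≤ ({bidx ends s p C st u,
              if bidx ends s p C st u = bidx ends s p C st v
              then bidx ends s p C st u - 1 else bidx ends s p C st v} :
              Finset ℕ).card := Finset.card_le_card hsub
        _ ≤ 2 := by
            refine (Finset.card_insert_le _ _).trans ?_
            simp
    have himgsub : hSfin.toFinset.image F ⊆ hTfin.toFinset := by
      intro e he
      rw [Finset.mem_image] at he
      obtain ⟨i, hi, rfl⟩ := he
      rw [Set.Finite.mem_toFinset] at hi ⊢
      exact himg i hi
    calc S.ncard = hSfin.toFinset.card := Set.ncard_eq_toFinset_card _ hSfin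
      _ ≤ 2 * (hSfin.toFinset.image F).card := hcard
      _ ≤ 2 * hTfin.toFinset.card := by
          have := Finset.card_le_card himgsub
          omega
      _ = 2 * T.ncard := by rw [Set.ncard_eq_toFinset_card _ hTfin]
  refine ⟨hmain, ?_⟩
  have h2 := hmain 0 (q + 1) (by omega) le_rfl
  have hseteq : {i : ℕ | 0 ≤ i ∧ i ≤ q + 1 ∧
      ¬ Unaffected ends Z (bundleOf ends s p C st i)} =
      {i : ℕ | i ≤ q + 1 ∧ ¬ Unaffected ends Z (bundleOf ends s p C st i)} := by
    ext i
    simp [Nat.zero_le]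
  rw [hseteq] at h2
  refine h2.trans ?_
  have hsub2 : {e | e ∈ Z ∧ ∀ v ∈ ends e,
      v ∈ ⋃ i ∈ Set.Icc (0 - 1) (q + 1 + 1) ∩ Set.Iic (q + 1),
            bundleOf ends s p C st i} ⊆ Z := fun e he => he.1
  have hle := Set.ncard_le_ncard hsub2 (Set.toFinite Z)
  omega


end FlowAug
end

section
/- Let G be a finite undirected multigraph with s, t ∈ V(G), s ≠ t, let Z ⊆ E(G) be a star (s,t)-cut, and let P be a witnessing (s,t)-flow for Z in G. Let u, v ∈ V(P) be two vertices that are connected in G by a path none of whose edges is used by any path of P. Then either both u and v lie in R_s(Z), or both u and v lie in R_t(Z). -/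
/-!
Each path of `P` contains exactly one edge of `Z`, so its vertices up to that edge lie in
`R_s(Z)` and the remaining ones in `R_t(Z)`. Along a walk avoiding the flow, membership in
`R_t(Z)` never changes: an edge outside `Z` preserves it, and an edge of `Z` off the flow is not
in `Z_{s,t}`, so neither of its endpoints (one of which lies in `R_s(Z)`) is in `R_t(Z)`.
-/

namespace FlowAug

section

variable {V E : Type} {ends : E → Sym2 V}

theorem Adj.symm {X : Set E} {x y : V} (h : Adj ends X x y) : Adj ends X y x :=
  let ⟨e, he, hends⟩ := h
  ⟨e, he, hends.trans Sym2.eq_swap⟩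

instance {X : Set E} : Std.Symm (Adj ends X) := ⟨fun _ _ => Adj.symm⟩

theorem Reach.symm {X : Set E} {x y : V} (h : Reach ends X x y) : Reach ends X y x :=
  symm_of (Relation.ReflTransGen (Adj ends X)) h

theorem mem_RS_of_adj {X : Set E} {S : Set V} {x y : V} (hx : x ∈ RS ends X S)
    (h : Adj ends X x y) : y ∈ RS ends X S :=
  let ⟨a, ha, hax⟩ := hx
  ⟨a, ha, hax.tail h⟩

namespace MGPath

variable {s t : V} (p : MGPath V E ends s t) {X : Set E}

theorem reach_vert {a b : ℕ} (hab : a ≤ b) (hb : b ≤ p.n)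
    (hX : ∀ l : Fin p.n, a ≤ l → l < b → p.edge l ∉ X) :
    Reach ends X (p.vert ⟨a, by omega⟩) (p.vert ⟨b, by omega⟩) := by
  induction b, hab using Nat.le_induction with
  | base => exact .refl
  | succ b hab ih =>
    exact (ih (by omega) fun l hal hlb => hX l hal (by omega)).tail
      ⟨p.edge ⟨b, by omega⟩, hX _ hab (by simp), p.ends_eq ⟨b, by omega⟩⟩

theorem vert_mem_RS_or_mem_RS (hp : {j | p.edge j ∈ X}.Subsingleton) (m : Fin (p.n + 1)) :
    p.vert m ∈ RS ends X {s} ∨ p.vert m ∈ RS ends X {t} := by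
  by_cases h : ∃ j : Fin p.n, p.edge j ∈ X ∧ (j : ℕ) < m
  · obtain ⟨j, hj, hjm⟩ := h
    have hreach := p.reach_vert (X := X) (Nat.le_of_lt_succ m.isLt) le_rfl
      fun l hml _ hl => by have := congrArg Fin.val (hp hl hj); omega
    exact Or.inr ⟨p.vert (Fin.last p.n), p.vert_last, hreach.symm⟩
  · push Not at h
    have hreach := p.reach_vert (X := X) (Nat.zero_le m) (Nat.le_of_lt_succ m.isLt)
      fun l _ hlm hl => absurd (h l hl) (not_le.mpr hlm)
    exact Or.inl ⟨p.vert 0, p.vert_zero, hreach⟩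

end MGPath

namespace IsStarCut

variable {s t : V} {Z : Set E} (hZ : IsStarCut ends s t Z) {F : Set E}
  (hF : Zst ends s t Z ⊆ F)
include hZ hF

theorem mem_RS_iff_of_adj {x y : V} (h : Adj ends F x y) :
    x ∈ RS ends Z {t} ↔ y ∈ RS ends Z {t} := by
  obtain ⟨e, heF, he⟩ := h
  by_cases heZ : e ∈ Z
  · obtain ⟨a, b, hab, ha, -⟩ := hZ.2 e heZ
    have hat : a ∉ RS ends Z {t} := fun hat => (hZ.1.subset ⟨ha, hat⟩ : a ∈ (∅ : Set V))
    have hbt : b ∉ RS ends Z {t} := fun hbt => heF (hF ⟨heZ, a, b, hab, ha, hbt⟩)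
    rcases Sym2.eq_iff.mp (he.symm.trans hab) with ⟨rfl, rfl⟩ | ⟨rfl, rfl⟩
    · exact iff_of_false hat hbt
    · exact iff_of_false hbt hat
  · have hadj : Adj ends Z x y := ⟨e, heZ, he⟩
    exact ⟨fun hx => mem_RS_of_adj hx hadj, fun hy => mem_RS_of_adj hy hadj.symm⟩

theorem mem_RS_iff_of_reach {x y : V} (h : Reach ends F x y) :
    x ∈ RS ends Z {t} ↔ y ∈ RS ends Z {t} := by
  induction h with
  | refl => exact Iff.rfl
  | tail _ hyz ih => exact ih.trans (hZ.mem_RS_iff_of_adj hF hyz)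

end IsStarCut

end

theorem flowVerts_same_side_general {V E : Type}
    (ends : E → Sym2 V)
    (s t : V)
    (Z : Set E) (hZ : IsStarCut ends s t Z)
    {k : ℕ} (P : Fin k → MGPath V E ends s t)
    (hP : IsWitnessingFlow ends s t Z P)
    (u v : V) (hu : u ∈ pathVerts P) (hv : v ∈ pathVerts P)
    (huv : Reach ends (pathEdges P) u v) :
    (u ∈ RS ends Z {s} ∧ v ∈ RS ends Z {s}) ∨
      (u ∈ RS ends Z {t} ∧ v ∈ RS ends Z {t}) := by
  obtain ⟨-, -, hZst, huniq⟩ := hP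
  have hside : ∀ x ∈ pathVerts P, x ∈ RS ends Z {s} ∨ x ∈ RS ends Z {t} := by
    rintro _ ⟨i, m, rfl⟩
    exact (P i).vert_mem_RS_or_mem_RS (fun _ hj _ hj' => (huniq i).unique hj hj') m
  have htu := hZ.mem_RS_iff_of_reach hZst huv
  by_cases hut : u ∈ RS ends Z {t}
  · exact Or.inr ⟨hut, htu.mp hut⟩
  · have hvt : v ∉ RS ends Z {t} := mt htu.mpr hut
    exact Or.inl ⟨(hside u hu).resolve_right hut, (hside v hv).resolve_right hvt⟩

/-- Let `Z` be a star `(s,t)`-cut and `P` a witnessing `(s,t)`-flow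
for `Z`.  If `u, v ∈ V(P)` are connected in `G` by a path using no edge of any path of
`P`, then either both `u` and `v` lie in `R_s(Z)` or both lie in `R_t(Z)`. -/
theorem flowVerts_same_side {V E : Type} [Fintype V] [Fintype E]
    (ends : E → Sym2 V) (hloop : ∀ e, ¬ (ends e).IsDiag)
    (s t : V) (hst : s ≠ t)
    (Z : Set E) (hZ : IsStarCut ends s t Z)
    {k : ℕ} (P : Fin k → MGPath V E ends s t)
    (hP : IsWitnessingFlow ends s t Z P)
    (u v : V) (hu : u ∈ pathVerts P) (hv : v ∈ pathVerts P)
    (huv : Reach ends (pathEdges P) u v) :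
    (u ∈ RS ends Z {s} ∧ v ∈ RS ends Z {s}) ∨
      (u ∈ RS ends Z {t} ∧ v ∈ RS ends Z {t}) :=
  flowVerts_same_side_general ends s t Z hZ P hP u v hu hv huv

end FlowAug
end
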